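/- For a smooth function f on ℍ×ℂ satisfying the Jacobi transformation law of weight k and index M, the lowering operator δ₁(f) = y·∂f/∂w̄ (with y = Im z) satisfies the Jacobi transformation law of weight k−1 and index M. -/

import Mathlib

open Complex

/-- The Jacobi transformation law of weight `k`, index `M` under the real Jacobi group
SL(2,ℝ)⋉H(ℝ). -/
def JacobiLaw (k M : ℤ) (f : ℂ → ℂ → ℂ) : Prop :=
  ∀ (a b c d lam mu : ℝ), a * d - b * c = 1 → ∀ z w : ℂ, 0 < z.im →
    f (((a : ℂ) * z + b) / ((c : ℂ) * z + d))
      ((w + (lam : ℂ) * z + mu) / ((c : ℂ) * z + d)) =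
    ((c : ℂ) * z + d) ^ k *
      Complex.exp (2 * (Real.pi : ℂ) * Complex.I * (M : ℂ) *
        ((c : ℂ) * w ^ 2 / ((c : ℂ) * z + d) - (lam : ℂ) ^ 2 * z
          - 2 * (lam : ℂ) * w - (lam : ℂ) * mu)) * f z w

/-- The Wirtinger derivative ∂/∂w̄ in the second variable. -/
noncomputable def dwbar (f : ℂ → ℂ → ℂ) (z w : ℂ) : ℂ :=
  ((fderiv ℝ (f z) w) 1 + Complex.I * (fderiv ℝ (f z) w) Complex.I) / 2

/-- for a smooth `f` satisfying the weight-k, index-M Jacobi transformation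
law, the lowering operator δ₁(f) = y·∂f/∂w̄ satisfies the law of weight k−1, index M. -/
theorem lowering_delta1 (k M : ℤ) (hM : 0 < M) (f : ℂ → ℂ → ℂ)
    (hsmooth : ContDiff ℝ (⊤ : ℕ∞) (fun p : ℂ × ℂ => f p.1 p.2))
    (hf : JacobiLaw k M f) :
    JacobiLaw (k - 1) M (fun z w => ((z.im : ℝ) : ℂ) * dwbar f z w) := by
  unfold JacobiLaw at hf ⊢
  have hfz : ∀ z₀ w₀ : ℂ, DifferentiableAt ℝ (f z₀) w₀ := by
    intro z₀ w₀
    have h1 : DifferentiableAt ℝ ((fun p : ℂ × ℂ => f p.1 p.2) ∘ (fun w : ℂ => (z₀, w))) w₀ :=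
      DifferentiableAt.comp w₀ ((hsmooth.differentiable (by simp)) (z₀, w₀)) (by fun_prop)
    exact h1
  intro a b c d lam mu hdet z w hz
  simp only
  set cz : ℂ := (c : ℂ) * z + d with hcz
  have hden : cz ≠ 0 := by
    intro h
    have him : c * z.im = 0 := by
      have := congrArg Complex.im h
      simpa [hcz] using this
    have hc : c = 0 := by
      rcases mul_eq_zero.1 him with h' | h'
      · exact h'
      · exact absurd h' hz.ne'
    have hd : (d : ℂ) = 0 := by simpa [hcz, hc] using h
    have hd' : d = 0 := by exact_mod_cast hd
    rw [hc, hd'] at hdet; simp at hdet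
  set Z : ℂ := ((a : ℂ) * z + b) / cz with hZ
  set E : ℂ := Complex.exp (2 * (Real.pi : ℂ) * Complex.I * (M : ℂ) *
        ((c : ℂ) * w ^ 2 / cz - (lam : ℂ) ^ 2 * z - 2 * (lam : ℂ) * w - (lam : ℂ) * mu)) with hE
  -- imaginary part of Z
  have hN : Complex.normSq cz ≠ 0 := by
    simpa [Complex.normSq_eq_zero] using hden
  have himZ : Z.im = z.im / Complex.normSq cz := by
    rw [hZ, Complex.div_im]
    field_simp
    simp [hcz, Complex.normSq_apply, Complex.add_re, Complex.add_im, Complex.mul_re,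
      Complex.mul_im]
    ring_nf
    nlinarith [hdet, sq_nonneg z.im]
  -- the functions
  set W : ℂ → ℂ := fun w' => (w' + (lam : ℂ) * z + mu) / cz with hW
  set J : ℂ → ℂ := fun w' => cz ^ k *
      Complex.exp (2 * (Real.pi : ℂ) * Complex.I * (M : ℂ) *
        ((c : ℂ) * w' ^ 2 / cz - (lam : ℂ) ^ 2 * z - 2 * (lam : ℂ) * w' - (lam : ℂ) * mu)) with hJ
  have heq : (fun w' => f Z (W w')) = fun w' => J w' * f z w' := by
    funext w'
    exact hf a b c d lam mu hdet z w' hz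
  -- derivatives
  set A : ℂ →L[ℝ] ℂ := fderiv ℝ (f Z) (W w) with hA
  set B : ℂ →L[ℝ] ℂ := fderiv ℝ (f z) w with hB
  have hWd : HasDerivAt W (1 / cz) w := by
    simpa using (((hasDerivAt_id w).add_const ((lam : ℂ) * z)).add_const (mu : ℂ)).div_const cz
  have hJdiff : DifferentiableAt ℂ J w := by
    apply DifferentiableAt.const_mul
    apply DifferentiableAt.cexp
    fun_prop
  set J' : ℂ := deriv J w with hJ'
  have hJd : HasDerivAt J J' w := hJdiff.hasDerivAt
  have hg1 : HasFDerivAt (fun w' => f Z (W w'))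
      (A.comp ((ContinuousLinearMap.smulRight (1 : ℂ →L[ℂ] ℂ) (1 / cz)).restrictScalars ℝ)) w :=
    ((hfz Z (W w)).hasFDerivAt).comp w (hWd.hasFDerivAt.restrictScalars ℝ)
  have hg2 : HasFDerivAt (fun w' => J w' * f z w')
      (J w • B + f z w • ((ContinuousLinearMap.smulRight (1 : ℂ →L[ℂ] ℂ) J').restrictScalars ℝ)) w :=
    (hJd.hasFDerivAt.restrictScalars ℝ).mul ((hfz z w).hasFDerivAt)
  have hfd : A.comp ((ContinuousLinearMap.smulRight (1 : ℂ →L[ℂ] ℂ) (1 / cz)).restrictScalars ℝ)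
      = J w • B + f z w • ((ContinuousLinearMap.smulRight (1 : ℂ →L[ℂ] ℂ) J').restrictScalars ℝ) := by
    rw [heq] at hg1
    exact hg1.unique hg2
  have e1 := congrArg (fun T : ℂ →L[ℝ] ℂ => T 1) hfd
  have eI := congrArg (fun T : ℂ →L[ℝ] ℂ => T Complex.I) hfd
  simp only [ContinuousLinearMap.coe_comp', Function.comp_apply,
    ContinuousLinearMap.coe_restrictScalars', ContinuousLinearMap.smulRight_apply,
    ContinuousLinearMap.one_apply, ContinuousLinearMap.add_apply,
    ContinuousLinearMap.coe_smul', Pi.smul_apply, smul_eq_mul, one_smul] at e1 eI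
  -- e1 : A (1/cz) = J w * B 1 + f z w * J'
  -- eI : A (I • (1/cz)) = J w * B I + f z w * (I • J')
  have hsplit : ∀ v : ℂ, A v = (v.re : ℂ) * A 1 + (v.im : ℂ) * A Complex.I := by
    intro v
    conv_lhs => rw [← Complex.re_add_im v]
    rw [show (v.re : ℂ) + (v.im : ℂ) * Complex.I = v.re • (1 : ℂ) + v.im • Complex.I by
      simp [Complex.real_smul]]
    rw [map_add, map_smul, map_smul]
    simp [Complex.real_smul]
  have hu : (1 / cz : ℂ) ≠ 0 := one_div_ne_zero hden
  set u : ℂ := 1 / cz with hu'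
  have hAu : A u = (u.re : ℂ) * A 1 + (u.im : ℂ) * A Complex.I := hsplit u
  have hAIu : A (Complex.I * u) = -(u.im : ℂ) * A 1 + (u.re : ℂ) * A Complex.I := by
    rw [hsplit (Complex.I * u)]
    simp [Complex.mul_re, Complex.mul_im]
  have hconj : (starRingEnd ℂ) u = (u.re : ℂ) - (u.im : ℂ) * Complex.I := by
    apply Complex.ext <;> simp
  have hmain : (starRingEnd ℂ) u * (A 1 + Complex.I * A Complex.I)
      = J w * (B 1 + Complex.I * B Complex.I) := by
    have e1' : (u.re : ℂ) * A 1 + (u.im : ℂ) * A Complex.I = J w * B 1 + f z w * J' := by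
      rw [← hAu]; simpa using e1
    have eI' : -(u.im : ℂ) * A 1 + (u.re : ℂ) * A Complex.I
        = J w * B Complex.I + f z w * (Complex.I * J') := by
      rw [← hAIu]; simpa [smul_eq_mul] using eI
    rw [hconj]
    linear_combination e1' + Complex.I * eI' + (f z w * J' - (u.im : ℂ) * A Complex.I) * Complex.I_sq
  -- now conclude
  have hWw : W w = (w + (lam : ℂ) * z + mu) / cz := rfl
  have hdw : dwbar f Z ((w + (lam : ℂ) * z + mu) / cz)
      = (A 1 + Complex.I * A Complex.I) / 2 := by
    rw [dwbar, ← hWw, ← hA]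
  have hdw2 : dwbar f z w = (B 1 + Complex.I * B Complex.I) / 2 := by rw [dwbar, ← hB]
  have hcc : (starRingEnd ℂ) cz ≠ 0 := by simpa using hden
  have hX : A 1 + Complex.I * A Complex.I
      = (starRingEnd ℂ) cz * (J w * (B 1 + Complex.I * B Complex.I)) := by
    have h2 : (starRingEnd ℂ) u = ((starRingEnd ℂ) cz)⁻¹ := by
      rw [hu']; simp
    rw [h2] at hmain
    field_simp at hmain
    linear_combination hmain
  rw [hdw, hdw2, himZ, Complex.ofReal_div, hX]
  rw [show J w = cz ^ k * E from rfl]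
  rw [← Complex.mul_conj]
  have h5 : cz ^ k = cz ^ (k - 1) * cz := by
    rw [← zpow_add_one₀ hden (k - 1)]; norm_num
  rw [h5]
  field_simp
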